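/- arXiv:1803.11033 — 3 statements merged into one kernel-verified Lean document; each statement's English description precedes it below -/
import Mathlib

section
/- Let n, p, q be positive integers, Σ an n×n positive definite real matrix, τ a nonzero real number, and X an n×(p+q) real matrix whose columns are indexed by Fin p ⊕ Fin q; write X_pri for the n×p submatrix of X consisting of the columns indexed by the first summand, and let K be the (p+q)×(p+q) block-diagonal matrix with blocks 0 (of size p×p) and the q×q identity. Then the matrix Xᵀ Σ⁻¹ X + (1/τ²) K is positive definite if and only if the p columns of X_pri are linearly independent. -/
/-!
Both `Xᵀ Σ⁻¹ X` and `K / τ²` are positive semidefinite, so their sum is positive definite exactly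
when their kernels meet only in `0`. The kernel of `Xᵀ Σ⁻¹ X` is that of `X`, and the kernel of `K`
consists of the vectors vanishing on the potential coordinates; on such vectors `X` acts as
`X_pri`, so the kernels meet trivially iff `X_pri` is injective.
-/

open Matrix

namespace Matrix

section RCLike

open scoped ComplexOrder

variable {𝕜 : Type*} [RCLike 𝕜] {m n : Type*} [Fintype m] [Fintype n]

theorem PosSemidef.posDef_add_iff {A B : Matrix n n 𝕜} (hA : A.PosSemidef) (hB : B.PosSemidef) :
    (A + B).PosDef ↔ ∀ x, A *ᵥ x = 0 → B *ᵥ x = 0 → x = 0 := by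
  refine ⟨fun hAB x hAx hBx => ?_, fun h => ?_⟩
  · by_contra hx
    simpa [add_mulVec, hAx, hBx] using hAB.dotProduct_mulVec_pos hx
  · refine PosDef.of_dotProduct_mulVec_pos (hA.isHermitian.add hB.isHermitian) fun x hx => ?_
    rw [add_mulVec, dotProduct_add]
    have hAx := hA.dotProduct_mulVec_nonneg x
    have hBx := hB.dotProduct_mulVec_nonneg x
    refine (add_nonneg hAx hBx).lt_of_ne fun hsum => hx ?_
    obtain ⟨hA0, hB0⟩ := (add_eq_zero_iff_of_nonneg hAx hBx).mp hsum.symm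
    exact h x ((hA.dotProduct_mulVec_zero_iff x).mp hA0) ((hB.dotProduct_mulVec_zero_iff x).mp hB0)

theorem PosDef.conjTranspose_mul_mul_mulVec_eq_zero_iff {A : Matrix m m 𝕜} (hA : A.PosDef)
    (B : Matrix m n 𝕜) (x : n → 𝕜) : (Bᴴ * A * B) *ᵥ x = 0 ↔ B *ᵥ x = 0 := by
  rw [← (hA.posSemidef.conjTranspose_mul_mul_same B).dotProduct_mulVec_zero_iff,
    ← mulVec_mulVec, ← mulVec_mulVec, dotProduct_mulVec, ← star_mulVec]
  refine ⟨fun h => ?_, fun h => by simp [h]⟩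
  by_contra hBx
  exact (hA.dotProduct_mulVec_pos hBx).ne' h

end RCLike

section Blocks

variable {R l m n : Type*}

theorem posSemidef_fromBlocks_zero_one [Ring R] [PartialOrder R] [StarRing R]
    [StarOrderedRing R] [DecidableEq m] [DecidableEq n] :
    (fromBlocks 0 0 0 1 : Matrix (m ⊕ n) (m ⊕ n) R).PosSemidef := by
  rw [← diagonal_zero, ← diagonal_one, fromBlocks_diagonal]
  exact .diagonal (by rintro (i | i) <;> simp)

variable [Fintype m] [Fintype n]

theorem fromBlocks_zero_one_mulVec_eq_zero_iff [Semiring R] [DecidableEq n] (x : m ⊕ n → R) :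
    (fromBlocks 0 0 0 1 : Matrix (m ⊕ n) (m ⊕ n) R) *ᵥ x = 0 ↔ x ∘ Sum.inr = 0 := by
  simp [fromBlocks_mulVec, ← Sum.elim_zero_zero, Sum.elim_eq_iff]

theorem submatrix_id_inl_mulVec [Semiring R] (X : Matrix l (m ⊕ n) R) (g : m → R) :
    X.submatrix id Sum.inl *ᵥ g = X *ᵥ Sum.elim g 0 := by
  ext i
  simp [mulVec, dotProduct, Fintype.sum_sum_type]

theorem linearIndependent_inl_cols_iff [CommRing R] (X : Matrix l (m ⊕ n) R) :
    LinearIndependent R (fun j i => X i (Sum.inl j)) ↔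
      ∀ x, X *ᵥ x = 0 → x ∘ Sum.inr = 0 → x = 0 := by
  rw [show (fun j i => X i (Sum.inl j)) = (X.submatrix id Sum.inl).col from rfl,
    ← mulVec_injective_iff, ← coe_mulVecLin, injective_iff_map_eq_zero]
  simp only [mulVecLin_apply, submatrix_id_inl_mulVec]
  refine ⟨fun h x hXx hx => ?_, fun h g hg => ?_⟩
  · rw [← Sum.elim_comp_inl_inr x, hx,
      h (x ∘ Sum.inl) (by rwa [← hx, Sum.elim_comp_inl_inr]), Sum.elim_zero_zero]
  · simpa using congrArg (· ∘ Sum.inl) (h _ hg rfl)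

end Blocks

end Matrix

theorem stmt_6_general (n p q : ℕ)
    (Cov : Matrix (Fin n) (Fin n) ℝ) (hCov : Cov.PosDef)
    (τ : ℝ) (hτ : τ ≠ 0)
    (X : Matrix (Fin n) (Fin p ⊕ Fin q) ℝ)
    (K : Matrix (Fin p ⊕ Fin q) (Fin p ⊕ Fin q) ℝ)
    (hK : K = Matrix.fromBlocks 0 0 0 1) :
    (Xᵀ * Cov⁻¹ * X + (1 / τ ^ 2) • K).PosDef ↔
      LinearIndependent ℝ (fun j : Fin p => fun i : Fin n => X i (Sum.inl j)) := by
  have hc : 1 / τ ^ 2 ≠ 0 := by positivity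
  rw [← conjTranspose_eq_transpose_of_trivial, hK,
    (hCov.inv.posSemidef.conjTranspose_mul_mul_same X).posDef_add_iff
      (posSemidef_fromBlocks_zero_one.smul (by positivity)),
    linearIndependent_inl_cols_iff]
  simp only [hCov.inv.conjTranspose_mul_mul_mulVec_eq_zero_iff, smul_mulVec, smul_eq_zero, hc,
    false_or, fromBlocks_zero_one_mulVec_eq_zero_iff]

theorem stmt_6 (n p q : ℕ) (hn : 0 < n) (hp : 0 < p) (hq : 0 < q)
    (Cov : Matrix (Fin n) (Fin n) ℝ) (hCov : Cov.PosDef)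
    (τ : ℝ) (hτ : τ ≠ 0)
    (X : Matrix (Fin n) (Fin p ⊕ Fin q) ℝ)
    (K : Matrix (Fin p ⊕ Fin q) (Fin p ⊕ Fin q) ℝ)
    (hK : K = Matrix.fromBlocks 0 0 0 1) :
    (Xᵀ * Cov⁻¹ * X + (1 / τ ^ 2) • K).PosDef ↔
      LinearIndependent ℝ (fun j : Fin p => fun i : Fin n => X i (Sum.inl j)) :=
  stmt_6_general n p q Cov hCov τ hτ X K hK
end

section
/- Let n, p, q be positive integers, τ a nonzero real number, Σ an n×n positive definite real matrix, and X an n×(p+q) real matrix. For ξ > 0 let R(ξ) be the (p+q)×(p+q) block-diagonal real matrix with blocks ξ² I_p and τ² I_q, and let K be the (p+q)×(p+q) block-diagonal matrix with blocks 0_{p×p} and I_q. Assume the matrix Xᵀ Σ⁻¹ X + (1/τ²) K is invertible. Then R(ξ) Xᵀ (X R(ξ) Xᵀ + Σ)⁻¹ tends to (Xᵀ Σ⁻¹ X + (1/τ²) K)⁻¹ Xᵀ Σ⁻¹ as ξ → ∞. -/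
open Matrix Filter

set_option maxHeartbeats 2000000 in
theorem stmt_12 (n p q : ℕ) (hn : 0 < n) (hp : 0 < p) (hq : 0 < q)
    (τ : ℝ) (hτ : τ ≠ 0)
    (Cov : Matrix (Fin n) (Fin n) ℝ) (hCov : Cov.PosDef)
    (X : Matrix (Fin n) (Fin p ⊕ Fin q) ℝ)
    (R : ℝ → Matrix (Fin p ⊕ Fin q) (Fin p ⊕ Fin q) ℝ)
    (hR : ∀ ξ : ℝ, R ξ = Matrix.fromBlocks (ξ ^ 2 • (1 : Matrix (Fin p) (Fin p) ℝ)) 0 0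
      (τ ^ 2 • (1 : Matrix (Fin q) (Fin q) ℝ)))
    (K : Matrix (Fin p ⊕ Fin q) (Fin p ⊕ Fin q) ℝ)
    (hK : K = Matrix.fromBlocks 0 0 0 1)
    (hinv : IsUnit (Xᵀ * Cov⁻¹ * X + (1 / τ ^ 2) • K).det) :
    Tendsto (fun ξ : ℝ => R ξ * Xᵀ * (X * R ξ * Xᵀ + Cov)⁻¹) atTop
      (nhds ((Xᵀ * Cov⁻¹ * X + (1 / τ ^ 2) • K)⁻¹ * Xᵀ * Cov⁻¹)) := by
  classical
  -- notation
  set A : Matrix (Fin p ⊕ Fin q) (Fin p ⊕ Fin q) ℝ := Xᵀ * Cov⁻¹ * X + (1 / τ ^ 2) • K with hA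
  -- N ξ : the inverse of R ξ
  set N : ℝ → Matrix (Fin p ⊕ Fin q) (Fin p ⊕ Fin q) ℝ := fun ξ =>
    Matrix.fromBlocks ((ξ ^ 2)⁻¹ • (1 : Matrix (Fin p) (Fin p) ℝ)) 0 0
      ((τ ^ 2)⁻¹ • (1 : Matrix (Fin q) (Fin q) ℝ)) with hN
  have hdiagR : ∀ ξ : ℝ, R ξ = Matrix.diagonal (Sum.elim (fun _ => ξ ^ 2) (fun _ => τ ^ 2)) := by
    intro ξ
    rw [hR ξ, smul_one_eq_diagonal, smul_one_eq_diagonal, Matrix.fromBlocks_diagonal]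
  have hdiagN : ∀ ξ : ℝ, N ξ = Matrix.diagonal (Sum.elim (fun _ => (ξ ^ 2)⁻¹)
      (fun _ => (τ ^ 2)⁻¹)) := by
    intro ξ
    simp only [hN, smul_one_eq_diagonal, Matrix.fromBlocks_diagonal]
  have hτ2 : (0 : ℝ) < τ ^ 2 := by positivity
  -- N ξ * R ξ = 1 for ξ ≠ 0
  have hNR : ∀ ξ : ℝ, ξ ≠ 0 → N ξ * R ξ = 1 := by
    intro ξ hξ
    rw [hdiagR, hdiagN, Matrix.diagonal_mul_diagonal]
    ext i j
    rcases eq_or_ne i j with h | h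
    · subst h
      rcases i with i | i <;>
        simp [Matrix.diagonal_apply_eq, Matrix.one_apply_eq,
          inv_mul_cancel₀ (pow_ne_zero 2 hξ), inv_mul_cancel₀ (pow_ne_zero 2 hτ)]
    · rw [Matrix.diagonal_apply_ne _ h, Matrix.one_apply_ne h]
  -- positivity facts
  have hRpos : ∀ ξ : ℝ, 0 < ξ → (R ξ).PosDef := by
    intro ξ hξ
    rw [hdiagR]
    refine Matrix.posDef_diagonal_iff.mpr ?_
    rintro (i | i) <;> simp [hτ2, pow_pos hξ]
  have hNpos : ∀ ξ : ℝ, 0 < ξ → (N ξ).PosDef := by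
    intro ξ hξ
    rw [hdiagN]
    refine Matrix.posDef_diagonal_iff.mpr ?_
    rintro (i | i) <;> simp [hτ2, pow_pos hξ]
  -- S ξ := X * R ξ * Xᵀ + Cov is PosDef for ξ > 0
  have hSpos : ∀ ξ : ℝ, 0 < ξ → (X * R ξ * Xᵀ + Cov).PosDef := by
    intro ξ hξ
    have h1 : (X * R ξ * Xᵀ).PosSemidef := by
      simpa using (hRpos ξ hξ).posSemidef.mul_mul_conjTranspose_same X
    exact Matrix.PosDef.posSemidef_add h1 hCov
  -- M ξ := Xᵀ * Cov⁻¹ * X + N ξ is PosDef for ξ > 0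
  have hMpos : ∀ ξ : ℝ, 0 < ξ → (Xᵀ * Cov⁻¹ * X + N ξ).PosDef := by
    intro ξ hξ
    have h1 : (Xᵀ * Cov⁻¹ * X).PosSemidef := by
      simpa using hCov.inv.posSemidef.conjTranspose_mul_mul_same X
    exact Matrix.PosDef.posSemidef_add h1 (hNpos ξ hξ)
  -- the key identity
  have hkey : ∀ ξ : ℝ, 0 < ξ →
      R ξ * Xᵀ * (X * R ξ * Xᵀ + Cov)⁻¹ = (Xᵀ * Cov⁻¹ * X + N ξ)⁻¹ * (Xᵀ * Cov⁻¹) := by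
    intro ξ hξ
    have hS := hSpos ξ hξ
    have hM := hMpos ξ hξ
    have hSdet : IsUnit (X * R ξ * Xᵀ + Cov).det := hS.det_pos.ne'.isUnit
    have hMdet : IsUnit (Xᵀ * Cov⁻¹ * X + N ξ).det := hM.det_pos.ne'.isUnit
    have hCovdet : IsUnit Cov.det := hCov.det_pos.ne'.isUnit
    have hid : (Xᵀ * Cov⁻¹ * X + N ξ) * (R ξ * Xᵀ) = Xᵀ * Cov⁻¹ * (X * R ξ * Xᵀ + Cov) := by
      have h1 : N ξ * (R ξ * Xᵀ) = Xᵀ := by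
        rw [← Matrix.mul_assoc, hNR ξ hξ.ne', Matrix.one_mul]
      have h2 : Cov⁻¹ * Cov = 1 := Matrix.nonsing_inv_mul Cov hCovdet
      rw [Matrix.add_mul, h1, Matrix.mul_add]
      congr 1
      · simp only [Matrix.mul_assoc]
      · rw [Matrix.mul_assoc, h2, Matrix.mul_one]
    have e2 : R ξ * Xᵀ = (Xᵀ * Cov⁻¹ * X + N ξ)⁻¹ * (Xᵀ * Cov⁻¹ * (X * R ξ * Xᵀ + Cov)) := by
      rw [← hid, ← Matrix.mul_assoc, Matrix.nonsing_inv_mul _ hMdet, Matrix.one_mul]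
    calc R ξ * Xᵀ * (X * R ξ * Xᵀ + Cov)⁻¹
        = (Xᵀ * Cov⁻¹ * X + N ξ)⁻¹ * (Xᵀ * Cov⁻¹ * (X * R ξ * Xᵀ + Cov))
            * (X * R ξ * Xᵀ + Cov)⁻¹ := by rw [← e2]
      _ = (Xᵀ * Cov⁻¹ * X + N ξ)⁻¹ * (Xᵀ * Cov⁻¹)
            * ((X * R ξ * Xᵀ + Cov) * (X * R ξ * Xᵀ + Cov)⁻¹) := by
          simp only [Matrix.mul_assoc]
      _ = (Xᵀ * Cov⁻¹ * X + N ξ)⁻¹ * (Xᵀ * Cov⁻¹) := by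
          rw [Matrix.mul_nonsing_inv _ hSdet, Matrix.mul_one]
  -- convergence of M ξ to A
  have hNA : ∀ ξ : ℝ, Xᵀ * Cov⁻¹ * X + N ξ
      = A + (ξ ^ 2)⁻¹ • (Matrix.fromBlocks 1 0 0 0 : Matrix _ _ ℝ) := by
    intro ξ
    rw [hA, hK, add_assoc]
    congr 1
    simp only [hN, Matrix.fromBlocks_smul, smul_zero, Matrix.fromBlocks_add,
      add_zero, zero_add, one_div]
  have hMtendsto : Tendsto (fun ξ : ℝ => Xᵀ * Cov⁻¹ * X + N ξ) atTop (nhds A) := by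
    have h1 : Tendsto (fun ξ : ℝ => (ξ ^ 2)⁻¹) atTop (nhds 0) :=
      (tendsto_pow_atTop (n := 2) (by norm_num)).inv_tendsto_atTop
    have h2 : Tendsto (fun ξ : ℝ =>
        (ξ ^ 2)⁻¹ • (Matrix.fromBlocks 1 0 0 0 : Matrix (Fin p ⊕ Fin q) (Fin p ⊕ Fin q) ℝ))
        atTop (nhds 0) := by
      simpa using h1.smul_const (Matrix.fromBlocks 1 0 0 0 : Matrix _ _ ℝ)
    have h3 := (tendsto_const_nhds (x := A) (f := atTop (α := ℝ))).add h2
    rw [add_zero] at h3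
    exact h3.congr fun ξ => (hNA ξ).symm
  -- continuity of inverse at A
  have hinvA : Tendsto (fun ξ : ℝ => (Xᵀ * Cov⁻¹ * X + N ξ)⁻¹) atTop (nhds A⁻¹) := by
    have hc : ContinuousAt Inv.inv A := by
      apply continuousAt_matrix_inv
      have h := NormedRing.inverse_continuousAt hinv.unit
      rwa [IsUnit.unit_spec] at h
    exact hc.tendsto.comp hMtendsto
  -- combine
  have hfinal : Tendsto (fun ξ : ℝ => (Xᵀ * Cov⁻¹ * X + N ξ)⁻¹ * (Xᵀ * Cov⁻¹)) atTop
      (nhds (A⁻¹ * (Xᵀ * Cov⁻¹))) := by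
    have hcont : Continuous fun B : Matrix (Fin p ⊕ Fin q) (Fin p ⊕ Fin q) ℝ =>
        B * (Xᵀ * Cov⁻¹) := continuous_id.matrix_mul continuous_const
    exact (hcont.continuousAt.tendsto).comp hinvA
  have heq : ∀ᶠ ξ : ℝ in atTop,
      (Xᵀ * Cov⁻¹ * X + N ξ)⁻¹ * (Xᵀ * Cov⁻¹) = R ξ * Xᵀ * (X * R ξ * Xᵀ + Cov)⁻¹ := by
    filter_upwards [eventually_gt_atTop 0] with ξ hξ
    exact (hkey ξ hξ).symm
  have h := hfinal.congr' heq
  rw [← Matrix.mul_assoc] at h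
  exact h
end

section
/- Let n, p, q be positive integers, τ a nonzero real number, Σ an n×n positive definite real matrix, and X an n×(p+q) real matrix. For ξ > 0 let R(ξ) be the (p+q)×(p+q) block-diagonal real matrix with blocks ξ² I_p and τ² I_q, and let K be the (p+q)×(p+q) block-diagonal matrix with blocks 0_{p×p} and I_q. Assume the matrix Xᵀ Σ⁻¹ X + (1/τ²) K is invertible. Then R(ξ) − R(ξ) Xᵀ (X R(ξ) Xᵀ + Σ)⁻¹ X R(ξ) tends to (Xᵀ Σ⁻¹ X + (1/τ²) K)⁻¹ as ξ → ∞. -/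
open Matrix Filter

set_option maxHeartbeats 1000000

theorem stmt_13 (n p q : ℕ) (hn : 0 < n) (hp : 0 < p) (hq : 0 < q)
    (τ : ℝ) (hτ : τ ≠ 0)
    (Cov : Matrix (Fin n) (Fin n) ℝ) (hCov : Cov.PosDef)
    (X : Matrix (Fin n) (Fin p ⊕ Fin q) ℝ)
    (R : ℝ → Matrix (Fin p ⊕ Fin q) (Fin p ⊕ Fin q) ℝ)
    (hR : ∀ ξ : ℝ, R ξ = Matrix.fromBlocks (ξ ^ 2 • (1 : Matrix (Fin p) (Fin p) ℝ)) 0 0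
      (τ ^ 2 • (1 : Matrix (Fin q) (Fin q) ℝ)))
    (K : Matrix (Fin p ⊕ Fin q) (Fin p ⊕ Fin q) ℝ)
    (hK : K = Matrix.fromBlocks 0 0 0 1)
    (hinv : IsUnit (Xᵀ * Cov⁻¹ * X + (1 / τ ^ 2) • K).det) :
    Tendsto (fun ξ : ℝ => R ξ - R ξ * Xᵀ * (X * R ξ * Xᵀ + Cov)⁻¹ * X * R ξ) atTop
      (nhds ((Xᵀ * Cov⁻¹ * X + (1 / τ ^ 2) • K)⁻¹)) := by
  have hτ2 : (τ : ℝ) ^ 2 ≠ 0 := pow_ne_zero _ hτ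
  set M : Matrix (Fin p ⊕ Fin q) (Fin p ⊕ Fin q) ℝ := Xᵀ * Cov⁻¹ * X with hM
  -- diagonal description of R
  have hRd : ∀ ξ : ℝ, R ξ = diagonal (Sum.elim (fun _ : Fin p => ξ ^ 2)
      (fun _ : Fin q => τ ^ 2)) := by
    intro ξ
    rw [hR ξ, smul_one_eq_diagonal, smul_one_eq_diagonal, fromBlocks_diagonal]
  -- diagonal description of K
  have hKd : K = diagonal (Sum.elim (fun _ : Fin p => (0 : ℝ)) fun _ : Fin q => 1) := by
    rw [hK]
    ext (i | i) (j | j) <;> simp [diagonal, Matrix.one_apply, Sum.inr.injEq, eq_comm]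
  -- inverse of R
  have hRinv : ∀ ξ : ℝ, ξ ≠ 0 → (R ξ)⁻¹ = diagonal (Sum.elim
      (fun _ : Fin p => (ξ ^ 2)⁻¹) fun _ : Fin q => (τ ^ 2)⁻¹) := by
    intro ξ hξ
    have hξ2 : ξ ^ 2 ≠ 0 := pow_ne_zero _ hξ
    refine inv_eq_right_inv ?_
    rw [hRd, diagonal_mul_diagonal, ← diagonal_one]
    refine congrArg diagonal ?_
    funext i
    rcases i with i | i <;> simp [mul_inv_cancel₀, hξ2, hτ2]
  -- the auxiliary matrix E
  set E : Matrix (Fin p ⊕ Fin q) (Fin p ⊕ Fin q) ℝ :=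
    diagonal (Sum.elim (fun _ : Fin p => (1 : ℝ)) fun _ : Fin q => 0) with hE
  have hKE : ∀ ξ : ℝ, ξ ≠ 0 → (R ξ)⁻¹ = (ξ ^ 2)⁻¹ • E + (1 / τ ^ 2) • K := by
    intro ξ hξ
    rw [hRinv ξ hξ, hE, hKd]
    ext (i | i) (j | j) <;>
      simp [diagonal_apply, Matrix.add_apply, Matrix.smul_apply, one_div]
  -- tendsto of the inner matrix
  have h0 : Tendsto (fun ξ : ℝ => (ξ ^ 2)⁻¹) atTop (nhds 0) :=
    (tendsto_pow_atTop two_ne_zero).inv_tendsto_atTop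
  have hmain : Tendsto (fun ξ : ℝ => (R ξ)⁻¹ + M) atTop (nhds (M + (1 / τ ^ 2) • K)) := by
    have h1 : Tendsto (fun ξ : ℝ => (ξ ^ 2)⁻¹ • E + (M + (1 / τ ^ 2) • K)) atTop
        (nhds ((0 : ℝ) • E + (M + (1 / τ ^ 2) • K))) :=
      (h0.smul_const E).add_const _
    rw [zero_smul, zero_add] at h1
    refine h1.congr' ?_
    filter_upwards [eventually_ne_atTop (0 : ℝ)] with ξ hξ
    rw [hKE ξ hξ, add_assoc, add_comm ((1 / τ ^ 2) • K) M]
  -- continuity of inversion at the limit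
  have hcont : ContinuousAt Inv.inv (M + (1 / τ ^ 2) • K) := by
    refine continuousAt_matrix_inv _ ?_
    rw [Ring.inverse_eq_inv']
    exact continuousAt_inv₀ hinv.ne_zero
  have htend : Tendsto (fun ξ : ℝ => ((R ξ)⁻¹ + M)⁻¹) atTop
      (nhds ((M + (1 / τ ^ 2) • K)⁻¹)) := hcont.tendsto.comp hmain
  refine htend.congr' ?_
  filter_upwards [eventually_ne_atTop (0 : ℝ)] with ξ hξ
  -- positive definiteness facts
  have hRpd : (R ξ).PosDef := by
    rw [hRd]
    refine posDef_diagonal_iff.mpr ?_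
    rintro (i | i) <;> simp <;> positivity
  have hRdet : IsUnit (R ξ).det := hRpd.det_pos.ne'.isUnit
  have hCdet : IsUnit Cov.det := hCov.det_pos.ne'.isUnit
  have hRR : ((R ξ)⁻¹)⁻¹ = R ξ := nonsing_inv_nonsing_inv _ hRdet
  have hCC : (Cov⁻¹)⁻¹ = Cov := nonsing_inv_nonsing_inv _ hCdet
  have hXRX : (X * R ξ * Xᵀ).PosSemidef := by
    have h := hRpd.posSemidef.mul_mul_conjTranspose_same X
    simpa using h
  have hsum : (Cov + X * R ξ * Xᵀ).PosDef := hCov.add_posSemidef hXRX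
  have hAC : IsUnit ((Cov⁻¹)⁻¹ + X * ((R ξ)⁻¹)⁻¹ * Xᵀ) := by
    rw [hCC, hRR]; exact hsum.isUnit
  have hW := Matrix.add_mul_mul_inv_eq_sub (A := (R ξ)⁻¹) (U := Xᵀ) (C := Cov⁻¹) (V := X)
    hRpd.inv.isUnit hCov.inv.isUnit hAC
  rw [hW, hRR, hCC, add_comm Cov (X * R ξ * Xᵀ)]
end
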